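/- Let q, a, b ∈ ℂ with |q| < 1, q ≠ 0, and suppose a q^j ≠ 1, b q^j ≠ 1 and a b q^{2j-1} ≠ 1 for all integers j ≥ 0. Define g(x) = ∑_{n=0}^∞ (q;q)_∞ (x;q)_∞ (b;q)_∞ · (x b q^{n-1};q)_n q^n / ((q;q)_n (x;q)_n (b;q)_n) (an absolutely convergent series). Then g satisfies the recurrence g(a) − (1 − a)·g(a q) − a q·g(a q²) = 0. -/

import Mathlib

/-- The finite q-shifted factorial `(a;q)_n = ∏_{j=0}^{n-1} (1 - a q^j)`. -/
noncomputable def qPoch (q a : ℂ) (n : ℕ) : ℂ := ∏ j ∈ Finset.range n, (1 - a * q ^ j)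

/-- The infinite q-shifted factorial `(a;q)_∞ = ∏_{j=0}^{∞} (1 - a q^j)`. -/
noncomputable def qPochInf (q a : ℂ) : ℂ := ∏' j : ℕ, (1 - a * q ^ j)

/-- The series `g(x) = ∑_{n=0}^∞ (q,x,b;q)_∞ (x b q^{n-1};q)_n q^n / ((q,x,b;q)_n)`. -/
noncomputable def g₁ (q b x : ℂ) : ℂ :=
  ∑' n : ℕ, qPochInf q q * qPochInf q x * qPochInf q b *
    (qPoch q (x * b * q ^ ((n : ℤ) - 1)) n * q ^ n /
      (qPoch q q n * qPoch q x n * qPoch q b n))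

/-!
The three ratios `(y;q)_∞ / (y;q)_n` in the summand of `g` collapse to `(y q^n;q)_∞`, so the
`n`-th term becomes `t_x(n) = q^n (q^{n+1};q)_∞ (b q^n;q)_∞ (x q^n;q)_∞ (x b q^{n-1};q)_n`, which
is `O(|q|^n)`. In this form, peeling one factor off each product shows that
`t_a(n+1) - (1-a) t_{aq}(n+1) = a q t_{aq²}(n)`, which reduces to the polynomial identity
`(1 - a q^{n+1})(1 - a b q^n) - (1 - a)(1 - a b q^{2n+1}) = a (1 - q^{n+1})(1 - b q^n)`.
Since also `t_a(0) = (1-a) t_{aq}(0)`, summing over `n` gives the recurrence.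
-/

open Finset

section QPochhammer

variable {q : ℂ}

theorem norm_mul_pow_le (hq : ‖q‖ ≤ 1) (a : ℂ) (n : ℕ) : ‖a * q ^ n‖ ≤ ‖a‖ := by
  rw [norm_mul, norm_pow]
  exact mul_le_of_le_one_right (norm_nonneg a) (pow_le_one₀ (norm_nonneg q) hq)

theorem self_mul_pow_ne_one (hq : ‖q‖ < 1) (j : ℕ) : q * q ^ j ≠ 1 := fun h => by
  have := congrArg norm h
  rw [← pow_succ', norm_pow, norm_one] at this
  exact (pow_lt_one₀ (norm_nonneg q) hq j.succ_ne_zero).ne this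

theorem qPoch_succ (q a : ℂ) (n : ℕ) : qPoch q a (n + 1) = qPoch q a n * (1 - a * q ^ n) :=
  prod_range_succ _ _

theorem qPoch_succ' (q a : ℂ) (n : ℕ) : qPoch q a (n + 1) = (1 - a) * qPoch q (a * q) n := by
  rw [qPoch, prod_range_succ', pow_zero, mul_one, mul_comm, qPoch]
  exact congrArg _ (prod_congr rfl fun j _ => by ring)

theorem qPoch_ne_zero {a : ℂ} (ha : ∀ j : ℕ, a * q ^ j ≠ 1) (n : ℕ) : qPoch q a n ≠ 0 :=
  prod_ne_zero_iff.2 fun j _ => sub_ne_zero_of_ne (ha j).symm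

theorem multipliable_one_sub_mul_pow (hq : ‖q‖ < 1) (a : ℂ) :
    Multipliable fun j : ℕ => 1 - a * q ^ j := by
  simpa only [sub_eq_add_neg] using
    Complex.multipliable_one_add_of_summable ((summable_geometric_of_norm_lt_one hq).mul_left a).neg

theorem qPochInf_eq_qPoch_mul (hq : ‖q‖ < 1) (a : ℂ) (n : ℕ) :
    qPochInf q a = qPoch q a n * qPochInf q (a * q ^ n) := by
  have h : Multipliable fun j : ℕ => 1 - a * q ^ (j + n) :=
    (multipliable_one_sub_mul_pow hq (a * q ^ n)).congr fun j => by ring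
  rw [qPochInf, ← Multipliable.prod_mul_tprod_nat_mul' (f := fun j => 1 - a * q ^ j) h, qPoch,
    qPochInf]
  exact congrArg _ (tprod_congr fun j => by ring)

theorem qPochInf_eq_one_sub_mul (hq : ‖q‖ < 1) (a : ℂ) :
    qPochInf q a = (1 - a) * qPochInf q (a * q) := by
  simpa [qPoch] using qPochInf_eq_qPoch_mul hq a 1

theorem qPochInf_div_qPoch (hq : ‖q‖ < 1) {a : ℂ} {n : ℕ} (h : qPoch q a n ≠ 0) :
    qPochInf q a / qPoch q a n = qPochInf q (a * q ^ n) := by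
  rw [qPochInf_eq_qPoch_mul hq a n, mul_div_cancel_left₀ _ h]

theorem norm_qPoch_le (hq : ‖q‖ < 1) {a : ℂ} {R : ℝ} (ha : ‖a‖ ≤ R) (n : ℕ) :
    ‖qPoch q a n‖ ≤ Real.exp (R / (1 - ‖q‖)) := by
  have hsum : ∑ j ∈ range n, ‖-(a * q ^ j)‖ ≤ R / (1 - ‖q‖) := by
    simp only [norm_neg, norm_mul, norm_pow, ← mul_sum]
    calc ‖a‖ * ∑ j ∈ range n, ‖q‖ ^ j ≤ R * (1 / (1 - ‖q‖)) := by
          gcongr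
          · exact (norm_nonneg a).trans ha
          · simpa [← range_eq_Ico] using
              geom_sum_Ico_le_of_lt_one (m := 0) (n := n) (norm_nonneg q) hq
      _ = R / (1 - ‖q‖) := mul_one_div _ _
  calc ‖qPoch q a n‖ ≤ ‖qPoch q a n - 1‖ + 1 := by
        simpa using norm_le_norm_sub_add (qPoch q a n) 1
    _ ≤ Real.exp (∑ j ∈ range n, ‖-(a * q ^ j)‖) := by
        simpa [qPoch, ← sub_eq_add_neg, le_sub_iff_add_le] using
          (range n).norm_prod_one_add_sub_one_le fun j => -(a * q ^ j)
    _ ≤ Real.exp (R / (1 - ‖q‖)) := Real.exp_le_exp.2 hsum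

theorem norm_qPochInf_le (hq : ‖q‖ < 1) {a : ℂ} {R : ℝ} (ha : ‖a‖ ≤ R) :
    ‖qPochInf q a‖ ≤ Real.exp (R / (1 - ‖q‖)) :=
  le_of_tendsto' (multipliable_one_sub_mul_pow hq a).hasProd.tendsto_prod_nat.norm
    (norm_qPoch_le hq ha)

end QPochhammer

noncomputable def g₁Summand (q b x : ℂ) (n : ℕ) : ℂ :=
  q ^ n * qPochInf q (q ^ (n + 1)) * qPochInf q (b * q ^ n) * qPochInf q (x * q ^ n) *
    qPoch q (x * b * q ^ ((n : ℤ) - 1)) n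

section Summand

variable {q : ℂ}

theorem g₁_eq_tsum_g₁Summand (hq : ‖q‖ < 1) {b x : ℂ} (hb : ∀ j : ℕ, b * q ^ j ≠ 1)
    (hx : ∀ j : ℕ, x * q ^ j ≠ 1) : g₁ q b x = ∑' n, g₁Summand q b x n := by
  refine tsum_congr fun n => ?_
  rw [g₁Summand, pow_succ', ← qPochInf_div_qPoch hq (qPoch_ne_zero (self_mul_pow_ne_one hq) n),
    ← qPochInf_div_qPoch hq (qPoch_ne_zero hb n), ← qPochInf_div_qPoch hq (qPoch_ne_zero hx n)]
  ring

theorem summable_g₁Summand (hq : ‖q‖ < 1) (b x : ℂ) : Summable (g₁Summand q b x) := by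
  have hq1 : ‖q‖ ≤ 1 := hq.le
  set E : ℝ → ℝ := fun R => Real.exp (R / (1 - ‖q‖))
  have hlast (n : ℕ) : ‖qPoch q (x * b * q ^ ((n : ℤ) - 1)) n‖ ≤ E (‖x‖ * ‖b‖) := by
    cases n with
    | zero => simpa [qPoch, E] using div_nonneg (norm_nonneg (x * b)) (sub_nonneg.2 hq1)
    | succ m =>
      rw [Nat.cast_succ, add_sub_cancel_right, zpow_natCast]
      exact norm_qPoch_le hq ((norm_mul_pow_le hq1 _ m).trans_eq (norm_mul x b)) _
  refine .of_norm_bounded ((summable_geometric_of_lt_one (norm_nonneg q) hq).mul_left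
    (E 1 * E ‖b‖ * E ‖x‖ * E (‖x‖ * ‖b‖))) fun n => ?_
  have hpow : ‖q ^ (n + 1)‖ ≤ 1 := by simpa using norm_mul_pow_le hq1 1 (n + 1)
  simp only [g₁Summand, norm_mul, norm_pow]
  calc ‖q‖ ^ n * ‖qPochInf q (q ^ (n + 1))‖ * ‖qPochInf q (b * q ^ n)‖ *
        ‖qPochInf q (x * q ^ n)‖ * ‖qPoch q (x * b * q ^ ((n : ℤ) - 1)) n‖
      ≤ ‖q‖ ^ n * E 1 * E ‖b‖ * E ‖x‖ * E (‖x‖ * ‖b‖) := by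
        gcongr
        exacts [norm_qPochInf_le hq hpow, norm_qPochInf_le hq (norm_mul_pow_le hq1 b n),
          norm_qPochInf_le hq (norm_mul_pow_le hq1 x n), hlast n]
    _ = E 1 * E ‖b‖ * E ‖x‖ * E (‖x‖ * ‖b‖) * ‖q‖ ^ n := by ring

theorem g₁Summand_zero_sub (hq : ‖q‖ < 1) (a b : ℂ) :
    g₁Summand q b a 0 - (1 - a) * g₁Summand q b (a * q) 0 = 0 := by
  simp only [g₁Summand, qPoch, range_zero, prod_empty, pow_zero, mul_one, one_mul, zero_add,
    pow_one]
  rw [qPochInf_eq_one_sub_mul hq a]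
  ring

theorem g₁Summand_succ_sub (hq : ‖q‖ < 1) (a b : ℂ) (n : ℕ) :
    g₁Summand q b a (n + 1) - (1 - a) * g₁Summand q b (a * q) (n + 1) =
      a * q * g₁Summand q b (a * q ^ 2) n := by
  have hshift (k : ℕ) : ((k + 1 : ℕ) : ℤ) - 1 = k := by push_cast; ring
  have e₁ : a * b * q ^ (((n + 1 : ℕ) : ℤ) - 1) = a * b * q ^ n := by
    rw [hshift, zpow_natCast]
  have e₂ : a * q * b * q ^ (((n + 1 : ℕ) : ℤ) - 1) = a * b * q ^ (n + 1) := by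
    rw [hshift, zpow_natCast]; ring
  have e₃ : a * q ^ 2 * b * q ^ ((n : ℤ) - 1) = a * b * q ^ (n + 1) := by
    calc a * q ^ 2 * b * q ^ ((n : ℤ) - 1) = a * b * (q ^ (2 : ℤ) * q ^ ((n : ℤ) - 1)) := by
          rw [zpow_ofNat]; ring
      _ = a * b * q ^ (((n + 1 : ℕ) : ℤ)) := by
          -- the exponents sum to `n + 1 ≠ 0`, so this holds even at `q = 0`
          rw [← zpow_add' (.inr (.inl (by omega)))]
          congr 2
          push_cast
          ring
      _ = a * b * q ^ (n + 1) := by rw [zpow_natCast]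
  have hQ : qPochInf q (q ^ (n + 1)) = (1 - q ^ (n + 1)) * qPochInf q (q ^ (n + 1 + 1)) := by
    rw [qPochInf_eq_one_sub_mul hq, ← pow_succ]
  have hB : qPochInf q (b * q ^ n) = (1 - b * q ^ n) * qPochInf q (b * q ^ (n + 1)) := by
    rw [qPochInf_eq_one_sub_mul hq, mul_assoc, ← pow_succ]
  have hA : qPochInf q (a * q ^ (n + 1)) =
      (1 - a * q ^ (n + 1)) * qPochInf q (a * q * q ^ (n + 1)) := by
    rw [qPochInf_eq_one_sub_mul hq, mul_right_comm]
  have hP : qPoch q (a * b * q ^ n) (n + 1) =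
      (1 - a * b * q ^ n) * qPoch q (a * b * q ^ (n + 1)) n := by
    rw [qPoch_succ', mul_assoc _ (q ^ n), ← pow_succ]
  rw [g₁Summand, g₁Summand, g₁Summand, e₁, e₂, e₃,
    show a * q ^ 2 * q ^ n = a * q * q ^ (n + 1) by ring, hQ, hB, hA, hP, qPoch_succ]
  ring

end Summand

theorem g_recurrence_one_general (q a b : ℂ) (hq : ‖q‖ < 1)
    (ha : ∀ j : ℕ, a * q ^ j ≠ 1) (hb : ∀ j : ℕ, b * q ^ j ≠ 1) :
    g₁ q b a - (1 - a) * g₁ q b (a * q) - a * q * g₁ q b (a * q ^ 2) = 0 := by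
  have haq (j : ℕ) : a * q * q ^ j ≠ 1 := by simpa [pow_succ', mul_assoc] using ha (j + 1)
  have haq₂ (j : ℕ) : a * q ^ 2 * q ^ j ≠ 1 := by simpa [pow_add, mul_assoc] using ha (2 + j)
  have hsa := summable_g₁Summand hq b a
  have hsaq := (summable_g₁Summand hq b (a * q)).mul_left (1 - a)
  rw [g₁_eq_tsum_g₁Summand hq hb ha, g₁_eq_tsum_g₁Summand hq hb haq,
    g₁_eq_tsum_g₁Summand hq hb haq₂, ← tsum_mul_left, ← tsum_mul_left, ← hsa.tsum_sub hsaq,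
    (hsa.sub hsaq).tsum_eq_zero_add, g₁Summand_zero_sub hq, zero_add, sub_eq_zero]
  exact tsum_congr (g₁Summand_succ_sub hq a b)

/-- The recurrence (2.5): `g(a) - (1-a) g(aq) - aq g(aq²) = 0`. -/
theorem g_recurrence_one (q a b : ℂ) (hq : ‖q‖ < 1) (hq0 : q ≠ 0)
    (ha : ∀ j : ℕ, a * q ^ j ≠ 1) (hb : ∀ j : ℕ, b * q ^ j ≠ 1)
    (hab : ∀ j : ℕ, a * b * q ^ (2 * (j : ℤ) - 1) ≠ 1) :
    g₁ q b a - (1 - a) * g₁ q b (a * q) - a * q * g₁ q b (a * q ^ 2) = 0 :=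
  g_recurrence_one_general q a b hq ha hb
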